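/- arXiv:1407.1179 — 2 statements merged into one kernel-verified Lean document; each statement's English description precedes it below -/
import Mathlib

section
/- For every integer d ≥ 1, the family of sets of d-topological recurrence has the Ramsey property: if S ⊆ ℤ is a set of d-topological recurrence and S = S_1 ∪ S_2, then S_1 is a set of d-topological recurrence or S_2 is a set of d-topological recurrence. -/
open scoped Classical
open MeasureTheory Filter Topology

noncomputable section

/-- Integer iterate of a bijection `T` of a set: `zIter T n = T^n`. -/
def zIter {X : Type*} (T : Equiv.Perm X) (n : ℤ) : X → X := ⇑(T ^ n)

/-- Integer iterate of a homeomorphism. -/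
def hIter {X : Type*} [TopologicalSpace X] (T : X ≃ₜ X) (n : ℤ) : X → X :=
  zIter T.toEquiv n

/-- The integer nearest to `a`, with ties broken towards the smaller integer.
This is the `⌈·⌉` of the paper. -/
def nearInt (a : ℝ) : ℤ := if a - (⌊a⌋ : ℝ) ≤ 1/2 then ⌊a⌋ else ⌈a⌉

/-- The distance from `a` to the nearest integer, i.e. `‖a‖` in the paper. -/
def distInt (a : ℝ) : ℝ := |a - (nearInt a : ℝ)|

/-- Generalized polynomials of degree at most `d` (for `d ≥ 1`):
`GP 1` is the smallest collection of functions `ℤ → ℝ` containing `n ↦ a n`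
and closed under taking the nearest integer, scalar multiplication and finite sums;
`GP d` moreover contains every `GP e` for `e < d` and all functions
`n ↦ a₀ n^{p₀} ⌈f₁(n)⌉ ⋯ ⌈f k (n)⌉` with `f l ∈ GP (p l)` and `p₀ + ∑ p l = d`. -/
inductive GP : ℕ → (ℤ → ℝ) → Prop
  | lin (a : ℝ) : GP 1 (fun n => a * n)
  | mono {d : ℕ} (hd : 1 ≤ d) (a₀ : ℝ) (p₀ : ℕ) {k : ℕ} (p : Fin k → ℕ)
      (f : Fin k → ℤ → ℝ) (hf : ∀ l, GP (p l) (f l)) (hsum : p₀ + ∑ l, p l = d) :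
      GP d (fun n => a₀ * (n : ℝ) ^ p₀ * ∏ l, (nearInt (f l n) : ℝ))
  | incl {d e : ℕ} (hed : e < d) {f : ℤ → ℝ} (hf : GP e f) : GP d f
  | ceil {d : ℕ} {f : ℤ → ℝ} (hf : GP d f) : GP d (fun n => (nearInt (f n) : ℝ))
  | smul {d : ℕ} (c : ℝ) {f : ℤ → ℝ} (hf : GP d f) : GP d (fun n => c * f n)
  | add {d : ℕ} {f g : ℤ → ℝ} (hf : GP d f) (hg : GP d g) : GP d (fun n => f n + g n)

/-- The bracket expression `L(a₁, …, a_ℓ) = a₁⌈L(a₂, …, a_ℓ)⌉`, `L(a) = a`. -/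
def Lfun : List ℝ → ℝ
  | [] => 0
  | [a] => a
  | a :: b :: rest => a * (nearInt (Lfun (b :: rest)) : ℝ)

/-- Special generalized polynomials of degree at most `d`:
the functions `n ↦ L(n^{j₁} a₁, …, n^{j_ℓ} a_ℓ)` with `1 ≤ ℓ`, `j t ≥ 1`, `∑ j t ≤ d`. -/
def SGP (d : ℕ) (g : ℤ → ℝ) : Prop :=
  ∃ ℓ : ℕ, 1 ≤ ℓ ∧ ∃ (a : Fin ℓ → ℝ) (j : Fin ℓ → ℕ),
    (∀ t, 1 ≤ j t) ∧ (∑ t, j t) ≤ d ∧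
    g = fun n : ℤ => Lfun (List.ofFn fun t => (n : ℝ) ^ (j t) * a t)

/-- `FS({n i}) = {n_{i₁} + ⋯ + n_{i_k} : i₁ < ⋯ < i_k}`, the set of finite sums. -/
def FS {d : ℕ} (n : Fin d → ℤ) : Set ℤ :=
  { m | ∃ I : Finset (Fin d), I.Nonempty ∧ m = ∑ i ∈ I, n i }

/-- `SG d P`: sums `p_{i₁} + ⋯ + p_{i_k}` over strictly increasing finite index
sequences whose consecutive gaps are at most `d` (infinite sequence `P`). -/
def SG (d : ℕ) (P : ℕ → ℤ) : Set ℤ :=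
  { n | ∃ k : ℕ, ∃ i : Fin (k + 1) → ℕ, StrictMono i ∧
      (∀ t : Fin k, i t.succ - i t.castSucc ≤ d) ∧ n = ∑ t, P (i t) }

/-- `SGfin d P` : the same for a finite sequence `P` of length `m`. -/
def SGfin (d : ℕ) {m : ℕ} (P : Fin m → ℤ) : Set ℤ :=
  { n | ∃ k : ℕ, ∃ i : Fin (k + 1) → Fin m, StrictMono i ∧
      (∀ t : Fin k, (i t.succ : ℕ) - (i t.castSucc : ℕ) ≤ d) ∧ n = ∑ t, P (i t) }

/-- A set of integers is syndetic if it has bounded gaps. -/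
def Syndetic (A : Set ℤ) : Prop :=
  ∃ N : ℕ, ∀ i : ℤ, ∃ j, i ≤ j ∧ j ≤ i + N ∧ j ∈ A

/-- `F` has positive upper Banach density. -/
def PosUpperBanachDensity (F : Set ℤ) : Prop :=
  ∃ δ : ℝ, 0 < δ ∧ ∀ N : ℕ, ∃ (a : ℤ) (L : ℕ), N ≤ L ∧ 1 ≤ L ∧
    δ * L ≤ ((Finset.Icc a (a + L - 1)).filter (fun x => x ∈ F)).card

/-- A set `A ⊆ ℤ` contains finite IP-sets of arbitrarily long lengths. -/
def ContainsArbLongFIP (A : Set ℤ) : Prop :=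
  ∀ k : ℕ, 1 ≤ k → ∃ p : Fin k → ℤ, FS p ⊆ A

/-- A topological dynamical system `(X, T)` is minimal: every orbit is dense. -/
def MinimalTDS {X : Type*} [TopologicalSpace X] (T : X ≃ₜ X) : Prop :=
  ∀ x : X, Dense (Set.range fun n : ℤ => hIter T n x)

/-- `Nset T x U = N(x, U) = {n ∈ ℤ : Tⁿ x ∈ U}`. -/
def Nset {X : Type*} [TopologicalSpace X] (T : X ≃ₜ X) (x : X) (U : Set X) : Set ℤ :=
  { n : ℤ | hIter T n x ∈ U }

/-- The regionally proximal relation of order `d`. -/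
def RPd {X : Type*} [MetricSpace X] (T : X ≃ₜ X) (d : ℕ) (x y : X) : Prop :=
  ∀ δ : ℝ, 0 < δ → ∃ (x' y' : X) (n : Fin d → ℤ),
    dist x x' < δ ∧ dist y y' < δ ∧
    ∀ ε : Finset (Fin d), ε.Nonempty →
      dist (hIter T (∑ i ∈ ε, n i) x') (hIter T (∑ i ∈ ε, n i) y') < δ

/-- `S` is a set of `d`-topological recurrence. -/
def TopRecSet (d : ℕ) (S : Set ℤ) : Prop :=
  ∀ (X : Type) [MetricSpace X] [CompactSpace X] (T : X ≃ₜ X), MinimalTDS T →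
    ∀ U : Set X, IsOpen U → U.Nonempty →
      ∃ n ∈ S, (⋂ j ∈ Finset.range (d + 1), hIter T ((j : ℤ) * n) ⁻¹' U).Nonempty

/-- `S` is a set of `d`-recurrence (measurable recurrence). -/
def MeasRecSet (d : ℕ) (S : Set ℤ) : Prop :=
  ∀ (Y : Type) [MeasurableSpace Y] [StandardBorelSpace Y]
    (μ : Measure Y) [IsProbabilityMeasure μ] (T : Y ≃ᵐ Y),
    MeasurePreserving (⇑T) μ μ →
    ∀ A : Set Y, MeasurableSet A → 0 < μ A →
      ∃ n ∈ S, 0 < μ (⋂ j ∈ Finset.range (d + 1), zIter T.toEquiv ((j : ℤ) * n) ⁻¹' A)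

/-- `P` is a Birkhoff recurrence set of order `d`. -/
def BirkhoffRecSet (d : ℕ) (P : Set ℤ) : Prop :=
  ∀ (X : Type) [MetricSpace X] [CompactSpace X] (T : X ≃ₜ X), MinimalTDS T →
    ∀ U : Set X, IsOpen U → U.Nonempty →
      ∃ n : Fin d → ℤ, FS n ⊆ P ∧ (U ∩ ⋂ m ∈ FS n, hIter T m ⁻¹' U).Nonempty

/-- `F` is a Poincaré recurrence set of order `d`. -/
def PoincareRecSet (d : ℕ) (F : Set ℤ) : Prop :=
  ∀ (Y : Type) [MeasurableSpace Y] [StandardBorelSpace Y]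
    (μ : Measure Y) [IsProbabilityMeasure μ] (T : Y ≃ᵐ Y),
    MeasurePreserving (⇑T) μ μ →
    ∀ A : Set Y, MeasurableSet A → 0 < μ A →
      ∃ n : Fin d → ℤ, FS n ⊆ F ∧ 0 < μ (A ∩ ⋂ m ∈ FS n, zIter T.toEquiv m ⁻¹' A)

/-- The upper unitriangular matrix `M(a)` with entries `(M(a))_{i, i+k} = a i k`
(1-based indexing). -/
def Mmat (d : ℕ) (a : ℕ → ℕ → ℝ) : Matrix (Fin (d + 1)) (Fin (d + 1)) ℝ :=
  fun r c =>
    if (r : ℕ) = (c : ℕ) then 1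
    else if (r : ℕ) < (c : ℕ) then a ((r : ℕ) + 1) ((c : ℕ) - (r : ℕ)) else 0

/-- `P_ℓ(a; i, k) = ∑ a_i^{s₁} a_{i+s₁}^{s₂} ⋯`, sum over `(s₁,…,s_ℓ) ∈ {1,…,k}^ℓ`
with `s₁ + ⋯ + s_ℓ = k`. -/
def Ppoly (a : ℕ → ℕ → ℝ) (i k ℓ : ℕ) : ℝ :=
  ∑ s ∈ Finset.univ.filter (fun s : Fin ℓ → Fin k => (∑ t, ((s t : ℕ) + 1)) = k),
    ∏ t : Fin ℓ,
      a (i + ∑ u ∈ Finset.univ.filter (fun u : Fin ℓ => u < t), ((s u : ℕ) + 1))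
        ((s t : ℕ) + 1)

/-- The upper unitriangular matrix with superdiagonal `α₁, …, α_d` (1-based). -/
def Amat (d : ℕ) (α : ℕ → ℝ) : Matrix (Fin (d + 1)) (Fin (d + 1)) ℝ :=
  fun r c =>
    if (r : ℕ) = (c : ℕ) then 1
    else if (c : ℕ) = (r : ℕ) + 1 then α ((r : ℕ) + 1) else 0

end

/-!
Given counterexamples `(X₁, T₁, U₁)` for `S₁` and `(X₂, T₂, U₂)` for `S₂`, take a minimal
subsystem `Y` of the product `X₁ × X₂`. Its projection to `X₁` is onto, so some `y ∈ Y` lies over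
`U₁`, and some iterate `T₂ᵏ` moves its second coordinate into `U₂`. Recurrence of `S` in `Y` for the
open set of points lying over `U₁ × T₂⁻ᵏ U₂` yields `n ∈ S` recurrent for both `U₁` and `U₂`, and
`n` lies in `S₁` or in `S₂`.
-/

open Function

section Iterates

variable {X Y : Type*} [TopologicalSpace X] [TopologicalSpace Y]

theorem hIter_eq_coe_zpow (T : X ≃ₜ X) (n : ℤ) : hIter T n = ⇑(T ^ n) := by
  let toPerm : (X ≃ₜ X) →* Equiv.Perm X :=
    { toFun := Homeomorph.toEquiv, map_one' := rfl, map_mul' := fun _ _ => rfl }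
  exact congrArg DFunLike.coe (map_zpow toPerm T n).symm

theorem continuous_hIter (T : X ≃ₜ X) (n : ℤ) : Continuous (hIter T n) := by
  rw [hIter_eq_coe_zpow]
  exact (T ^ n).continuous

theorem Function.Semiconj.hIter_right {π : Y → X} {S : Y ≃ₜ Y} {T : X ≃ₜ X} (h : Semiconj π S T)
    (n : ℤ) : Semiconj π (hIter S n) (hIter T n) := by
  simp only [hIter_eq_coe_zpow]
  induction n using Int.induction_on with
  | zero => exact Semiconj.id_right
  | succ n ih =>
    rw [zpow_add_one, zpow_add_one]
    exact ih.comp_right h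
  | pred n ih =>
    rw [zpow_sub_one, zpow_sub_one]
    exact ih.comp_right (h.inverses_right S.apply_symm_apply T.symm_apply_apply)

theorem semiconj_hIter_self (T : X ≃ₜ X) (k : ℤ) : Semiconj (hIter T k) T T := fun x => by
  simp only [hIter_eq_coe_zpow, ← Homeomorph.mul_apply, (Commute.zpow_self T k).eq]

end Iterates

section MinimalSubsystem

variable {X Y : Type*} [TopologicalSpace X] [TopologicalSpace Y]

theorem preimage_range_hIter (T : X ≃ₜ X) (x : X) :
    T ⁻¹' Set.range (fun n => hIter T n x) = Set.range (fun n => hIter T n x) := by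
  ext y
  simp only [Set.mem_preimage, Set.mem_range, hIter_eq_coe_zpow]
  constructor
  · rintro ⟨n, hn⟩
    refine ⟨-1 + n, ?_⟩
    rw [zpow_add, zpow_neg_one, Homeomorph.mul_apply, hn, Homeomorph.inv_apply,
      T.symm_apply_apply]
  · rintro ⟨n, rfl⟩
    exact ⟨1 + n, by rw [zpow_add, zpow_one, Homeomorph.mul_apply]⟩

theorem exists_isClosed_minimalTDS_sets [CompactSpace X] [Nonempty X] (T : X ≃ₜ X) :
    ∃ (Y : Set X) (hY : Y = T ⁻¹' Y), Y.Nonempty ∧ IsClosed Y ∧ MinimalTDS (T.sets hY) := by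
  let 𝒮 : Set (Set X) := {A | A.Nonempty ∧ IsClosed A ∧ A = T ⁻¹' A}
  have chain : ∀ c ⊆ 𝒮, IsChain (· ⊆ ·) c → c.Nonempty → ∃ lb ∈ 𝒮, ∀ A ∈ c, lb ⊆ A := by
    intro c hc𝒮 hchain hcne
    have : Nonempty c := hcne.coe_sort
    refine ⟨⋂₀ c, ⟨?_, isClosed_sInter fun A hA => (hc𝒮 hA).2.1, ?_⟩,
      fun _ => Set.sInter_subset_of_mem⟩
    · exact IsCompact.nonempty_sInter_of_directed_nonempty_isCompact_isClosed
        (IsChain.directedOn hchain.symm) (fun A hA => (hc𝒮 hA).1)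
        (fun A hA => (hc𝒮 hA).2.1.isCompact) (fun A hA => (hc𝒮 hA).2.1)
    · ext x
      simp only [Set.mem_sInter, Set.mem_preimage]
      exact forall₂_congr fun A hA => Set.ext_iff.mp (hc𝒮 hA).2.2 x
  obtain ⟨Y, -, hYmin⟩ := zorn_superset_nonempty 𝒮 chain Set.univ
    ⟨Set.univ_nonempty, isClosed_univ, rfl⟩
  obtain ⟨hYne, hYcl, hY⟩ := hYmin.prop
  refine ⟨Y, hY, hYne, hYcl, fun y => ?_⟩
  have hval : Semiconj Subtype.val (T.sets hY) T := fun _ => rfl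
  have horbit : Subtype.val '' Set.range (fun n => hIter (T.sets hY) n y)
      = Set.range (fun n => hIter T n y) := by
    rw [← Set.range_comp]
    exact congrArg Set.range (funext fun n => hval.hIter_right n y)
  have hsub : closure (Set.range fun n => hIter T n y) ⊆ Y :=
    closure_minimal (Set.range_subset_iff.2 fun n => hval.hIter_right n y ▸ Subtype.prop _) hYcl
  have hclosure : closure (Set.range fun n => hIter T n y) = Y := by
    refine hYmin.eq_of_subset ⟨?_, isClosed_closure, ?_⟩ hsub
    · exact (Set.range_nonempty _).closure
    · rw [T.preimage_closure, preimage_range_hIter]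
  rw [Subtype.dense_iff, horbit, hclosure]

theorem MinimalTDS.surjective_of_semiconj [T2Space X] [CompactSpace Y] [Nonempty Y]
    {S : Y ≃ₜ Y} {T : X ≃ₜ X} (hT : MinimalTDS T) {π : Y → X} (hπ : Continuous π)
    (h : Semiconj π S T) : Surjective π := by
  obtain ⟨y⟩ := ‹Nonempty Y›
  have horbit : Set.range (fun n => hIter T n (π y)) ⊆ Set.range π :=
    Set.range_subset_iff.2 fun n => ⟨hIter S n y, h.hIter_right n y⟩
  have := closure_minimal horbit (isCompact_range hπ).isClosed
  rwa [(hT (π y)).closure_eq, Set.univ_subset_iff, Set.range_eq_univ] at this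

end MinimalSubsystem

theorem Function.Semiconj.nonempty_iInter_hIter_preimage {X Y : Type*} [TopologicalSpace X]
    [TopologicalSpace Y] {π : Y → X} {S : Y ≃ₜ Y} {T : X ≃ₜ X} (h : Semiconj π S T)
    {V : Set Y} {U : Set X} (hVU : Set.MapsTo π V U) {d : ℕ} {n : ℤ}
    (hV : (⋂ j ∈ Finset.range (d + 1), hIter S ((j : ℤ) * n) ⁻¹' V).Nonempty) :
    (⋂ j ∈ Finset.range (d + 1), hIter T ((j : ℤ) * n) ⁻¹' U).Nonempty := by
  obtain ⟨z, hz⟩ := hV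
  refine ⟨π z, ?_⟩
  simp only [Set.mem_iInter, Set.mem_preimage] at hz ⊢
  intro j hj
  rw [← h.hIter_right]
  exact hVU (hz j hj)

theorem TopRecSet.exists_mem_nonempty_iInter_and {d : ℕ} {S : Set ℤ} (hS : TopRecSet d S)
    {X₁ X₂ : Type} [MetricSpace X₁] [CompactSpace X₁] [MetricSpace X₂] [CompactSpace X₂]
    {T₁ : X₁ ≃ₜ X₁} {T₂ : X₂ ≃ₜ X₂} (hT₁ : MinimalTDS T₁) (hT₂ : MinimalTDS T₂)
    {U₁ : Set X₁} {U₂ : Set X₂} (hU₁ : IsOpen U₁) (hU₂ : IsOpen U₂)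
    (hne₁ : U₁.Nonempty) (hne₂ : U₂.Nonempty) :
    ∃ n ∈ S, (⋂ j ∈ Finset.range (d + 1), hIter T₁ ((j : ℤ) * n) ⁻¹' U₁).Nonempty ∧
      (⋂ j ∈ Finset.range (d + 1), hIter T₂ ((j : ℤ) * n) ⁻¹' U₂).Nonempty := by
  have : Nonempty X₁ := hne₁.to_subtype.map Subtype.val
  have : Nonempty X₂ := hne₂.to_subtype.map Subtype.val
  obtain ⟨Y, hY, hYne, hYcl, hmin⟩ := exists_isClosed_minimalTDS_sets (T₁.prodCongr T₂)
  have : CompactSpace Y := isCompact_iff_compactSpace.1 hYcl.isCompact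
  have : Nonempty Y := hYne.to_subtype
  have hπ₁ : Semiconj (fun y : Y => y.1.1) ((T₁.prodCongr T₂).sets hY) T₁ := fun _ => rfl
  have hπ₂ : Semiconj (fun y : Y => y.1.2) ((T₁.prodCongr T₂).sets hY) T₂ := fun _ => rfl
  obtain ⟨y, hy⟩ := hne₁.preimage (hT₁.surjective_of_semiconj (by fun_prop) hπ₁)
  obtain ⟨-, ⟨k, rfl⟩, hk⟩ := (hT₂ y.1.2).exists_mem_open hU₂ hne₂
  -- Shifting the second coordinate by `T₂ᵏ` puts `y` in both open sets at once.
  have hπ₂' := (semiconj_hIter_self T₂ k).comp_left hπ₂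
  let V : Set Y := (fun y : Y => y.1.1) ⁻¹' U₁ ∩ (hIter T₂ k ∘ fun y : Y => y.1.2) ⁻¹' U₂
  have hV : IsOpen V := (hU₁.preimage (by fun_prop)).inter
    (hU₂.preimage ((continuous_hIter T₂ k).comp (by fun_prop)))
  obtain ⟨n, hn, hrec⟩ := hS Y _ hmin V hV ⟨y, hy, hk⟩
  exact ⟨n, hn, hπ₁.nonempty_iInter_hIter_preimage (fun _ hz => hz.1) hrec,
    hπ₂'.nonempty_iInter_hIter_preimage (fun _ hz => hz.2) hrec⟩

theorem statement5_general (d : ℕ) (S S₁ S₂ : Set ℤ)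
    (hS : TopRecSet d S) (hU : S = S₁ ∪ S₂) :
    TopRecSet d S₁ ∨ TopRecSet d S₂ := by
  simp only [TopRecSet]
  by_contra! ⟨⟨X₁, _, _, T₁, hT₁, U₁, hU₁, hne₁, h₁⟩, ⟨X₂, _, _, T₂, hT₂, U₂, hU₂, hne₂, h₂⟩⟩
  obtain ⟨n, hn, hrec₁, hrec₂⟩ := hS.exists_mem_nonempty_iInter_and hT₁ hT₂ hU₁ hU₂ hne₁ hne₂
  rcases hU ▸ hn with hn | hn
  · exact hrec₁.ne_empty (h₁ n hn)
  · exact hrec₂.ne_empty (h₂ n hn)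

/-- The family of sets of `d`-topological recurrence has the Ramsey property. -/
theorem statement5 (d : ℕ) (hd : 1 ≤ d) (S S₁ S₂ : Set ℤ)
    (hS : TopRecSet d S) (hU : S = S₁ ∪ S₂) :
    TopRecSet d S₁ ∨ TopRecSet d S₂ :=
  statement5_general d S S₁ S₂ hS hU
end

section
/- Let d ≥ 1 be an integer. Every set F ⊆ ℤ that contains an SG_d-set (i.e. F ⊇ SG_d(P) for some infinite sequence P in ℤ) is a Poincaré recurrence set of order d. Moreover, every set F ⊆ ℤ such that for every k ≥ 1 there is a finite sequence P of length at least k in ℤ with SG_d(P) ⊆ F is a Poincaré recurrence set of order d. -/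
open scoped Classical
open MeasureTheory Filter Topology

/-! Split the indices of a long finite sequence `P` into the residue classes `t mod d`, and
let the `t`-th return time `n_t` be the sum of `P` over the class `t` in an interval of indices.
The intervals are chosen greedily for `t = 0, …, d - 1`: the current block is cut into `K`
equal sub-blocks, and as `K` translates `T^{-c_i} B` of the current set `B` by the partial sums
`c_i` cannot be almost disjoint, two of them, `i < j`, overlap in measure `≥ K⁻²`. Then
`n_t := c_j - c_i`, the set `B ∩ T^{-n_t} B` replaces `B`, and the later classes live inside
sub-block `i`. Since the intervals of later classes are nested in those of earlier ones, every
union of the chosen residue blocks has gaps at most `d`, so all finite sums of the `n_t` lie in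
`SG_d(P)`; the pigeonhole bounds only depend on `μ A`, which fixes the length of `P` needed. -/

open scoped ENNReal
open Finset

section Dynamics

variable {Y : Type*}

lemma zIter_zero (T : Equiv.Perm Y) : zIter T 0 = id := by
  simp [zIter]

lemma zIter_add (T : Equiv.Perm Y) (a b : ℤ) : zIter T (a + b) = zIter T a ∘ zIter T b := by
  simp [zIter, zpow_add, Equiv.Perm.coe_mul]

variable [MeasurableSpace Y] {μ : Measure Y} {T : Y ≃ᵐ Y}

lemma MeasureTheory.MeasurePreserving.zIter (hT : MeasurePreserving T μ μ) (n : ℤ) :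
    MeasurePreserving (zIter T.toEquiv n) μ μ := by
  cases n with
  | ofNat n => simpa [_root_.zIter, Equiv.Perm.coe_pow] using hT.iterate n
  | negSucc n =>
    simpa [_root_.zIter, zpow_negSucc, ← inv_pow, Equiv.Perm.coe_pow]
      using (hT.symm T).iterate (n + 1)

end Dynamics

section Pigeonhole

variable {Y ι : Type*} [MeasurableSpace Y] (μ : Measure Y)

lemma sum_measure_le_measure_biUnion_add_sum_inter [DecidableEq ι] (s : Finset ι) (C : ι → Set Y)
    (hC : ∀ i ∈ s, MeasurableSet (C i)) :
    ∑ i ∈ s, μ (C i) ≤ μ (⋃ i ∈ s, C i) + ∑ p ∈ s.offDiag, μ (C p.1 ∩ C p.2) := by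
  induction s using Finset.induction_on with
  | empty => simp
  | insert a s ha ih =>
    have hU : MeasurableSet (⋃ i ∈ s, C i) :=
      s.measurableSet_biUnion fun i hi => hC i (mem_insert_of_mem hi)
    have hinter : μ (C a ∩ ⋃ i ∈ s, C i) ≤ ∑ i ∈ s, μ (C a ∩ C i) := by
      rw [Set.inter_iUnion₂]
      exact measure_biUnion_finset_le s _
    have hpairs : ∑ p ∈ s.offDiag, μ (C p.1 ∩ C p.2) + ∑ i ∈ s, μ (C a ∩ C i)
        ≤ ∑ p ∈ (insert a s).offDiag, μ (C p.1 ∩ C p.2) := by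
      have hdisj : Disjoint s.offDiag ({a} ×ˢ s) := by
        simp only [disjoint_left, mem_offDiag, mem_product, mem_singleton]
        rintro p ⟨hp, -⟩ ⟨rfl, -⟩
        exact ha hp
      have hrow : ∑ i ∈ s, μ (C a ∩ C i) = ∑ p ∈ {a} ×ˢ s, μ (C p.1 ∩ C p.2) := by
        rw [sum_product, sum_singleton]
      rw [hrow, offDiag_insert ha, ← sum_union hdisj]
      exact sum_le_sum_of_subset subset_union_left
    calc ∑ i ∈ insert a s, μ (C i)
        ≤ μ (C a) + μ (⋃ i ∈ s, C i) + ∑ p ∈ s.offDiag, μ (C p.1 ∩ C p.2) := by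
          rw [sum_insert ha, add_assoc]
          gcongr
          exact ih fun i hi => hC i (mem_insert_of_mem hi)
      _ = μ (C a ∪ ⋃ i ∈ s, C i) + μ (C a ∩ ⋃ i ∈ s, C i)
            + ∑ p ∈ s.offDiag, μ (C p.1 ∩ C p.2) := by
          rw [measure_union_add_inter _ hU]
      _ ≤ μ (⋃ i ∈ insert a s, C i) + ∑ p ∈ (insert a s).offDiag, μ (C p.1 ∩ C p.2) := by
          rw [set_biUnion_insert, add_assoc]
          gcongr
          calc _ ≤ ∑ i ∈ s, μ (C a ∩ C i) + ∑ p ∈ s.offDiag, μ (C p.1 ∩ C p.2) := by gcongr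
            _ ≤ _ := by rw [add_comm]; exact hpairs

lemma exists_lt_measure_inter_ge [IsProbabilityMeasure μ] [LinearOrder ι] (s : Finset ι)
    (C : ι → Set Y) (hC : ∀ i ∈ s, MeasurableSet (C i)) (h : 2 ≤ ∑ i ∈ s, μ (C i)) :
    ∃ i ∈ s, ∃ j ∈ s, i < j ∧ ((#s : ℝ≥0∞) ^ 2)⁻¹ ≤ μ (C i ∩ C j) := by
  have hpairs : 1 ≤ ∑ p ∈ s.offDiag, μ (C p.1 ∩ C p.2) := by
    have h2 := (h.trans (sum_measure_le_measure_biUnion_add_sum_inter μ s C hC)).trans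
      (add_le_add_left prob_le_one _)
    rwa [← one_add_one_eq_two, ENNReal.add_le_add_iff_left ENNReal.one_ne_top] at h2
  have hne : s.offDiag.Nonempty := by
    rw [nonempty_iff_ne_empty]
    rintro h0
    simp [h0] at hpairs
  have hconst : ∑ _p ∈ s.offDiag, ((#s : ℝ≥0∞) ^ 2)⁻¹ ≤ 1 := by
    rw [sum_const, nsmul_eq_mul]
    calc (#s.offDiag : ℝ≥0∞) * ((#s : ℝ≥0∞) ^ 2)⁻¹ ≤ (#s : ℝ≥0∞) ^ 2 * ((#s : ℝ≥0∞) ^ 2)⁻¹ := by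
          gcongr
          rw [offDiag_card, sq]
          exact_mod_cast Nat.sub_le _ _
      _ ≤ 1 := ENNReal.mul_inv_le_one _
  obtain ⟨p, hp, hle⟩ := ENNReal.exists_le_of_sum_le hne (hconst.trans hpairs)
  obtain ⟨hi, hj, hij⟩ := mem_offDiag.1 hp
  rcases hij.lt_or_gt with hlt | hgt
  · exact ⟨_, hi, _, hj, hlt, hle⟩
  · exact ⟨_, hj, _, hi, hgt, by rwa [Set.inter_comm]⟩

variable {μ} [IsProbabilityMeasure μ] {T : Y ≃ᵐ Y}

lemma exists_lt_measure_inter_preimage_ge (hT : MeasurePreserving T μ μ) (c : ℕ → ℤ) {K : ℕ}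
    {B : Set Y} (hB : MeasurableSet B) (hKB : 2 ≤ K * μ B) :
    ∃ i j, i < j ∧ j < K ∧ ((K : ℝ≥0∞) ^ 2)⁻¹ ≤ μ (B ∩ zIter T.toEquiv (c j - c i) ⁻¹' B) := by
  set C := fun i => zIter T.toEquiv (c i) ⁻¹' B
  have hμC : ∀ i, μ (C i) = μ B := fun i =>
    (hT.zIter (c i)).measure_preimage hB.nullMeasurableSet
  obtain ⟨i, -, j, hj, hij, hle⟩ := exists_lt_measure_inter_ge μ (range K) C
    (fun i _ => (hT.zIter (c i)).measurable hB) (by simpa [hμC] using hKB)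
  have hCij : C i ∩ C j = zIter T.toEquiv (c i) ⁻¹' (B ∩ zIter T.toEquiv (c j - c i) ⁻¹' B) := by
    simp only [C, Set.preimage_inter, ← Set.preimage_comp, ← zIter_add, sub_add_cancel]
  rw [card_range, hCij, (hT.zIter (c i)).measure_preimage
    (hB.inter ((hT.zIter _).measurable hB)).nullMeasurableSet] at hle
  exact ⟨i, j, hij, mem_range.1 hj, hle⟩

end Pigeonhole

section ReturnSet

variable {Y ι : Type*} (T : Equiv.Perm Y) (n : ι → ℤ)

def returnSet (R : Finset ι) (B : Set Y) : Set Y :=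
  ⋂ S ∈ R.powerset, zIter T (∑ s ∈ S, n s) ⁻¹' B

lemma returnSet_empty (B : Set Y) : returnSet T n ∅ B = B := by
  simp [returnSet, zIter_zero]

lemma returnSet_insert [DecidableEq ι] {t : ι} {R : Finset ι} (ht : t ∉ R) (B : Set Y) :
    returnSet T n (insert t R) B = returnSet T n R (B ∩ zIter T (n t) ⁻¹' B) := by
  have hsum : ∀ S ∈ R.powerset, ∀ x,
      zIter T (∑ s ∈ insert t S, n s) x = zIter T (n t) (zIter T (∑ s ∈ S, n s) x) :=
    fun S hS x => by rw [sum_insert fun h => ht (mem_powerset.1 hS h), zIter_add]; rfl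
  ext x
  simp only [returnSet, Set.mem_iInter, Set.mem_preimage, Set.mem_inter_iff, powerset_insert,
    mem_union, mem_image]
  constructor
  · intro h S hS
    exact ⟨h S (Or.inl hS), hsum S hS x ▸ h _ (Or.inr ⟨S, hS, rfl⟩)⟩
  · rintro h S (hS | ⟨S, hS, rfl⟩)
    · exact (h S hS).1
    · exact (hsum S hS x).symm ▸ (h S hS).2

lemma returnSet_congr {n' : ι → ℤ} {R : Finset ι} (h : ∀ s ∈ R, n s = n' s) (B : Set Y) :
    returnSet T n R B = returnSet T n' R B := by
  refine Set.iInter₂_congr fun S hS => ?_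
  rw [sum_congr rfl fun s hs => h s (mem_powerset.1 hS hs)]

lemma mem_FS_comp_val {d : ℕ} {n : ℕ → ℤ} {x : ℤ} (hx : x ∈ FS fun s : Fin d => n s) :
    ∃ S ⊆ range d, S.Nonempty ∧ x = ∑ s ∈ S, n s := by
  obtain ⟨I, hI, rfl⟩ := hx
  refine ⟨I.map Fin.valEmbedding, fun s hs => ?_, hI.map, (sum_map I Fin.valEmbedding n).symm⟩
  obtain ⟨i, -, rfl⟩ := mem_map.1 hs
  exact mem_range.2 i.isLt

lemma returnSet_range_subset (T : Equiv.Perm Y) (n : ℕ → ℤ) (d : ℕ) (B : Set Y) :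
    returnSet T n (range d) B ⊆ B ∩ ⋂ x ∈ FS (fun s : Fin d => n s), zIter T x ⁻¹' B := by
  intro y hy
  simp only [returnSet, Set.mem_iInter] at hy
  refine ⟨by simpa [zIter_zero] using hy ∅ (empty_mem_powerset _), Set.mem_iInter₂.2 fun x hx => ?_⟩
  obtain ⟨S, hS, -, rfl⟩ := mem_FS_comp_val hx
  exact hy S (mem_powerset.2 hS)

end ReturnSet

structure NestedBlocks (R : Finset ℕ) (b len : ℕ) (u v : ℕ → ℕ) : Prop where
  start_le : ∀ s ∈ R, b ≤ u s
  lt : ∀ s ∈ R, u s < v s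
  le_end : ∀ s ∈ R, v s ≤ b + len
  nested : ∀ s ∈ R, ∀ s' ∈ R, s ≤ s' → u s ≤ u s' ∧ v s' ≤ v s

namespace NestedBlocks

variable {R : Finset ℕ} {b len : ℕ} {u v : ℕ → ℕ}

lemma empty (b len : ℕ) (u v : ℕ → ℕ) : NestedBlocks ∅ b len u v :=
  ⟨by simp, by simp, by simp, by simp⟩

lemma mono (h : NestedBlocks R b len u v) {S : Finset ℕ} (hS : S ⊆ R) :
    NestedBlocks S b len u v :=
  ⟨fun s hs => h.start_le s (hS hs), fun s hs => h.lt s (hS hs),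
    fun s hs => h.le_end s (hS hs), fun s hs s' hs' => h.nested s (hS hs) s' (hS hs')⟩

lemma update_insert {t b' len' c : ℕ} (h : NestedBlocks R b' len' u v) (ht : ∀ s ∈ R, t < s)
    (hlen' : 0 < len') (hb : b ≤ b') (hc : b' + len' ≤ c) (hc' : c ≤ b + len) :
    NestedBlocks (insert t R) b len (Function.update u t b') (Function.update v t c) := by
  have hu : ∀ s ∈ R, Function.update u t b' s = u s := fun s hs =>
    Function.update_of_ne (ht s hs).ne' _ _
  have hv : ∀ s ∈ R, Function.update v t c s = v s := fun s hs =>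
    Function.update_of_ne (ht s hs).ne' _ _
  refine ⟨?_, ?_, ?_, ?_⟩ <;> simp only [forall_mem_insert, Function.update_self]
  · exact ⟨hb, fun s hs => (hu s hs).symm ▸ hb.trans (h.start_le s hs)⟩
  · exact ⟨by omega, fun s hs => (hu s hs).symm ▸ (hv s hs).symm ▸ h.lt s hs⟩
  · exact ⟨hc', fun s hs => (hv s hs).symm ▸ by have := h.le_end s hs; omega⟩
  · refine ⟨⟨fun _ => ⟨le_rfl, le_rfl⟩, fun s' hs' _ => ?_⟩,
      fun s hs => ⟨fun hts => absurd hts (ht s hs).not_ge, fun s' hs' => ?_⟩⟩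
    · rw [hu s' hs', hv s' hs']
      exact ⟨h.start_le s' hs', by have := h.le_end s' hs'; omega⟩
    · rw [hu s hs, hv s hs, hu s' hs', hv s' hs']
      exact h.nested s hs s' hs'

end NestedBlocks

section Recurrence

variable {Y : Type*} [MeasurableSpace Y] {μ : Measure Y} [IsProbabilityMeasure μ] {T : Y ≃ᵐ Y}

lemma two_le_mul_of_inv_sq_le {k k' : ℕ} (hk : 0 < k) (hk' : 2 * k ^ 2 ≤ k') {x : ℝ≥0∞}
    (hx : ((k : ℝ≥0∞) ^ 2)⁻¹ ≤ x) : 2 ≤ k' * x :=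
  calc (2 : ℝ≥0∞) = 2 * (k : ℝ≥0∞) ^ 2 * ((k : ℝ≥0∞) ^ 2)⁻¹ := by
        rw [mul_assoc, ENNReal.mul_inv_cancel (by positivity) (by simp), mul_one]
    _ ≤ k' * x := by gcongr; exact_mod_cast hk'

-- In the application `g t a c = ∑ a ≤ q < c, P (d * q + t)` sums `P` over one residue class.
lemma exists_nestedBlocks_returnSet_pos (hT : MeasurePreserving T μ μ) (g : ℕ → ℕ → ℕ → ℤ)
    (hg : ∀ t a b c, a ≤ b → b ≤ c → g t a c = g t a b + g t b c)
    {K : ℕ → ℕ} (hKpos : ∀ t, 0 < K t) (hK : ∀ t, 2 * K t ^ 2 ≤ K (t + 1))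
    {d t : ℕ} (ht : t ≤ d) (b : ℕ) {B : Set Y} (hB : MeasurableSet B) (hKB : 2 ≤ K t * μ B) :
    ∃ u v : ℕ → ℕ, NestedBlocks (Ico t d) b (∏ r ∈ Ico t d, K r) u v ∧
      0 < μ (returnSet T.toEquiv (fun s => g s (u s) (v s)) (Ico t d) B) := by
  induction ht using Nat.decreasingInduction generalizing b B with
  | self =>
    refine ⟨id, id, Ico_self d ▸ NestedBlocks.empty _ _ _ _, ?_⟩
    rw [Ico_self, returnSet_empty, pos_iff_ne_zero]
    rintro h0
    simp [h0] at hKB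
  | of_succ t htd ih =>
    set L := ∏ r ∈ Ico (t + 1) d, K r
    have hL : ∏ r ∈ Ico t d, K r = K t * L := prod_eq_prod_Ico_succ_bot htd _
    have hLpos : 0 < L := prod_pos fun r _ => hKpos r
    obtain ⟨i, j, hij, hjK, hμ⟩ :=
      exists_lt_measure_inter_preimage_ge hT (fun i => g t b (b + i * L)) hB hKB
    have hshift : g t b (b + j * L) - g t b (b + i * L) = g t (b + i * L) (b + j * L) := by
      rw [hg t b (b + i * L) (b + j * L) (by omega) (by gcongr)]
      ring
    rw [hshift] at hμ
    obtain ⟨u, v, hblocks, hpos⟩ := ih (b + i * L) (hB.inter ((hT.zIter _).measurable hB))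
      (two_le_mul_of_inv_sq_le (hKpos t) (hK t) hμ)
    have hIco : Ico t d = insert t (Ico (t + 1) d) := by ext; simp; omega
    refine ⟨Function.update u t (b + i * L), Function.update v t (b + j * L), ?_, ?_⟩
    · rw [hL, hIco]
      refine hblocks.update_insert (fun s hs => (mem_Ico.1 hs).1) hLpos (by omega) ?_ ?_
      · calc b + i * L + L = b + (i + 1) * L := by ring
          _ ≤ b + j * L := by gcongr; omega
      · gcongr
    · rw [hIco, returnSet_insert _ _ (by simp), Function.update_self, Function.update_self,
        returnSet_congr _ _ (n' := fun s => g s (u s) (v s))]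
      · exact hpos
      · intro s hs
        have hst : s ≠ t := by have := (mem_Ico.1 hs).1; omega
        simp [Function.update_of_ne hst]

end Recurrence

section SumsWithGaps

lemma sum_mem_SGfin_of_gap {d m : ℕ} (P : Fin m → ℤ) {U : Finset ℕ} (hne : U.Nonempty)
    (hU : ∀ x ∈ U, x < m) (hgap : ∀ x ∈ U, ∀ z ∈ U, x < z → ∃ y ∈ U, x < y ∧ y ≤ x + d) :
    ∑ x ∈ U, (if h : x < m then P ⟨x, h⟩ else 0) ∈ SGfin d P := by
  obtain ⟨k, hk⟩ : ∃ k, #U = k + 1 := ⟨#U - 1, by have := hne.card_pos; omega⟩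
  set e := U.orderEmbOfFin hk
  have he : ∀ t, e t ∈ U := U.orderEmbOfFin_mem hk
  refine ⟨k, fun t => ⟨e t, hU _ (he t)⟩, fun a b hab => e.strictMono hab, fun t => ?_, ?_⟩
  · obtain ⟨y, hy, hxy, hyd⟩ :=
      hgap _ (he _) _ (he _) (e.strictMono (Fin.castSucc_lt_succ (i := t)))
    obtain ⟨r, rfl⟩ : y ∈ Set.range e := by rwa [range_orderEmbOfFin]
    have hr : t.succ ≤ r := Fin.castSucc_lt_iff_succ_le.1 (e.lt_iff_lt.1 hxy)
    have := e.monotone hr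
    simp only
    omega
  · conv_lhs => rw [← U.map_orderEmbOfFin_univ hk, sum_map]
    exact sum_congr rfl fun t _ => dif_pos (hU _ (he t))

def residueBlocks (d : ℕ) (u v : ℕ → ℕ) (S : Finset ℕ) : Finset ℕ :=
  S.biUnion fun s => (Ico (u s) (v s)).image (d * · + s)

variable {d : ℕ} {u v : ℕ → ℕ} {S : Finset ℕ}

lemma sum_residueBlocks (hS : ∀ s ∈ S, s < d) (f : ℕ → ℤ) :
    ∑ x ∈ residueBlocks d u v S, f x = ∑ s ∈ S, ∑ q ∈ Ico (u s) (v s), f (d * q + s) := by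
  rw [residueBlocks, sum_biUnion]
  · refine sum_congr rfl fun s hs => sum_image fun q _ q' _ h => ?_
    have hd : 0 < d := (Nat.zero_le s).trans_lt (hS s hs)
    exact Nat.eq_of_mul_eq_mul_left hd (Nat.add_right_cancel h)
  · intro s hs s' hs' hss'
    simp only [Function.onFun, disjoint_left, mem_image]
    rintro _ ⟨q, -, rfl⟩ ⟨q', -, h⟩
    apply hss'
    have := congrArg (· % d) h
    simpa [Nat.mul_add_mod, Nat.mod_eq_of_lt (hS s hs), Nat.mod_eq_of_lt (hS s' hs')]
      using this.symm

lemma residueBlocks_gap (hS : ∀ s ∈ S, s < d) {b len : ℕ} (h : NestedBlocks S b len u v) :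
    ∀ x ∈ residueBlocks d u v S, ∀ z ∈ residueBlocks d u v S, x < z →
      ∃ y ∈ residueBlocks d u v S, x < y ∧ y ≤ x + d := by
  intro x hx z hz hxz
  obtain ⟨s, hs, q, ⟨hq, -⟩, rfl⟩ : ∃ s ∈ S, ∃ q, (u s ≤ q ∧ q < v s) ∧ d * q + s = x := by
    simpa [residueBlocks] using hx
  obtain ⟨s', hs', q', ⟨-, hq'⟩, rfl⟩ : ∃ s ∈ S, ∃ q, (u s ≤ q ∧ q < v s) ∧ d * q + s = z := by
    simpa [residueBlocks] using hz
  by_cases hclose : d * q' + s' ≤ d * q + s + d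
  · exact ⟨_, hz, hxz, hclose⟩
  have hqq : q < q' := by
    by_contra! hle
    have := Nat.mul_le_mul_left d hle
    have := hS s' hs'
    omega
  have hs0 := S.min'_mem ⟨s, hs⟩
  have hleft := (h.nested _ hs0 s hs (S.min'_le s hs)).1
  have hright := (h.nested _ hs0 s' hs' (S.min'_le s' hs')).2
  refine ⟨d * (q + 1) + S.min' ⟨s, hs⟩,
    mem_biUnion.2 ⟨_, hs0, mem_image.2 ⟨q + 1, mem_Ico.2 ⟨by omega, by omega⟩, rfl⟩⟩, ?_, ?_⟩
  · have := hS s hs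
    rw [mul_add]
    omega
  · have := S.min'_le s hs
    rw [mul_add]
    omega

lemma sum_residueBlocks_mem_SGfin {m : ℕ} (P : Fin m → ℤ) (hS : ∀ s ∈ S, s < d)
    (hSne : S.Nonempty) {b len : ℕ} (h : NestedBlocks S b len u v) (hm : d * (b + len) ≤ m) :
    ∑ s ∈ S, ∑ q ∈ Ico (u s) (v s), (if hx : d * q + s < m then P ⟨_, hx⟩ else 0)
      ∈ SGfin d P := by
  rw [← sum_residueBlocks hS (fun x => if hx : x < m then P ⟨x, hx⟩ else 0)]
  refine sum_mem_SGfin_of_gap P ?_ ?_ (residueBlocks_gap hS h)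
  · obtain ⟨s, hs⟩ := hSne
    exact ⟨d * u s + s, mem_biUnion.2 ⟨s, hs, mem_image_of_mem _ (mem_Ico.2 ⟨le_rfl, h.lt s hs⟩)⟩⟩
  · intro x hx
    obtain ⟨s, hs, q, ⟨-, hq⟩, rfl⟩ : ∃ s ∈ S, ∃ q, (u s ≤ q ∧ q < v s) ∧ d * q + s = x := by
      simpa [residueBlocks] using hx
    have hqlen : q + 1 ≤ b + len := (h.le_end s hs).trans' hq
    have hmul := Nat.mul_le_mul_left d hqlen
    rw [mul_add, mul_one] at hmul
    have := hS s hs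
    omega

end SumsWithGaps

lemma SGfin_restrict_subset_SG (d k : ℕ) (P : ℕ → ℤ) : SGfin d (fun i : Fin k => P i) ⊆ SG d P := by
  rintro x ⟨l, i, hmono, hgap, rfl⟩
  exact ⟨l, fun t => i t, fun a b hab => hmono hab, hgap, rfl⟩

theorem poincareRecSet_of_forall_exists_SGfin_subset {d : ℕ} {F : Set ℤ}
    (hF : ∀ k : ℕ, 1 ≤ k → ∃ m : ℕ, k ≤ m ∧ ∃ P : Fin m → ℤ, SGfin d P ⊆ F) :
    PoincareRecSet d F := by
  intro Y _ _ μ _ T hT A hA hA0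
  obtain ⟨K0, hK0⟩ := ENNReal.exists_nat_mul_gt hA0.ne' (b := 2) (by simp)
  set K : ℕ → ℕ := fun t => (fun k => 2 * k ^ 2)^[t] K0
  have hKsucc : ∀ t, K (t + 1) = 2 * K t ^ 2 := fun t => Function.iterate_succ_apply' _ _ _
  have hKpos : ∀ t, 0 < K t := by
    intro t
    induction t with
    | zero => exact Nat.pos_of_ne_zero fun (h : K0 = 0) => by simp [h] at hK0
    | succ t ih => rw [hKsucc]; positivity
  obtain ⟨m, hm, P, hP⟩ := hF (d * ∏ r ∈ range d, K r + 1) (by omega)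
  set g : ℕ → ℕ → ℕ → ℤ := fun s a b => ∑ q ∈ Ico a b, if h : d * q + s < m then P ⟨_, h⟩ else 0
  obtain ⟨u, v, hblocks, hpos⟩ := exists_nestedBlocks_returnSet_pos hT g
    (fun t a b c hab hbc => (sum_Ico_consecutive _ hab hbc).symm) hKpos (fun t => (hKsucc t).ge)
    (Nat.zero_le d) 0 hA hK0.le
  rw [← range_eq_Ico] at hblocks hpos
  refine ⟨fun s => g s (u s) (v s), ?_,
    hpos.trans_le (measure_mono (returnSet_range_subset _ _ _ _))⟩
  rintro _ hx
  obtain ⟨S, hS, hSne, rfl⟩ := mem_FS_comp_val (n := fun s => g s (u s) (v s)) hx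
  exact hP (sum_residueBlocks_mem_SGfin P (fun s hs => mem_range.1 (hS hs)) hSne
    (hblocks.mono hS) (by rw [zero_add]; omega))

theorem statement12_general (d : ℕ) (F : Set ℤ) :
    ((∃ P : ℕ → ℤ, SG d P ⊆ F) → PoincareRecSet d F) ∧
    ((∀ k : ℕ, 1 ≤ k → ∃ m : ℕ, k ≤ m ∧ ∃ P : Fin m → ℤ, SGfin d P ⊆ F) →
      PoincareRecSet d F) :=
  ⟨fun ⟨P, hP⟩ => poincareRecSet_of_forall_exists_SGfin_subset fun k _ =>
      ⟨k, le_rfl, fun i => P i, (SGfin_restrict_subset_SG d k P).trans hP⟩,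
    poincareRecSet_of_forall_exists_SGfin_subset⟩

/-- Every set containing an `SG_d`-set (and even every set containing
arbitrarily long finite `SG_d`-sets) is a Poincaré recurrence set of order `d`. -/
theorem statement12 (d : ℕ) (hd : 1 ≤ d) (F : Set ℤ) :
    ((∃ P : ℕ → ℤ, SG d P ⊆ F) → PoincareRecSet d F) ∧
    ((∀ k : ℕ, 1 ≤ k → ∃ m : ℕ, k ≤ m ∧ ∃ P : Fin m → ℤ, SGfin d P ⊆ F) →
      PoincareRecSet d F) :=
  statement12_general d F
end
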